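/- arXiv:2208.09729 — 2 statements merged into one kernel-verified Lean document; each statement's English description precedes it below -/
import Mathlib

section
/- For each s ∈ ℕ₀, with η defined by η_s = 0 for 0 ≤ s < r, η_s = m-1 for s ≥ λ₀, and η_s = max over (s₁,…,s_r) with 1 ≤ s_i ≤ λ_i, ∑ s_i = s of min_i ⌊s_i m/λ_i⌋ for r ≤ s ≤ λ₀-1, one has η_s + η_{r+λ₀-1-s} ∈ {m-1, m}. In particular, if gcd(m, λ_j) = 1 for every j = 1,…,r, then η_s + η_{r+λ₀-1-s} = m - 1 for all s ∈ ℕ₀. -/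
open Finset

/-- min over i < r of ⌊s i * m / lam i⌋ -/
noncomputable def kinf (m r : ℕ) (lam : ℕ → ℕ) (s : ℕ → ℕ) : ℕ :=
  sInf {w : ℕ | ∃ i, i < r ∧ w = s i * m / lam i}

/-- η_k = max over tuples (s_1,…,s_r) with 1 ≤ s_i ≤ λ_i and ∑ s_i = k of min_i ⌊s_i m/λ_i⌋ -/
noncomputable def eta (m r : ℕ) (lam : ℕ → ℕ) (k : ℕ) : ℕ :=
  sSup {v : ℕ | ∃ s : ℕ → ℕ, (∀ i, i < r → 1 ≤ s i ∧ s i ≤ lam i) ∧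
      (∑ i ∈ Finset.range r, s i) = k ∧ v = kinf m r lam s}

/-- extended η: 0 for k < r, η_k for r ≤ k < λ₀, m-1 for k ≥ λ₀ -/
noncomputable def etaExt (m r lam0 : ℕ) (lam : ℕ → ℕ) (k : ℕ) : ℕ :=
  if k < r then 0 else if k < lam0 then eta m r lam k else m - 1

/-- ε_k = m k - λ₀ (η_k + 1) -/
noncomputable def eps (m r lam0 : ℕ) (lam : ℕ → ℕ) (k : ℕ) : ℤ :=
  (m : ℤ) * k - (lam0 : ℤ) * (etaExt m r lam0 lam k + 1)

def IsNumericalSemigroup (H : Set ℕ) : Prop :=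
  0 ∈ H ∧ (∀ a ∈ H, ∀ b ∈ H, a + b ∈ H) ∧ {x : ℕ | x ∉ H}.Finite

/-! For `r ≤ k ≤ λ₀` a tuple has `min_i ⌊s_i m / λ_i⌋ ≥ w` exactly when `s_i ≥ ⌈w λ_i / m⌉` for
all `i`, and the `s_i` may then be raised freely up to `λ_i`. Hence `w ≤ η_k` if and only if
`F(w) := ∑_i ⌈w λ_i / m⌉ ≤ k`, so `η` is the generalized inverse of the step function `F`; as
`F(m) = λ₀`, this gives `η_k < m` for `k < λ₀`.
The pairing `s ↔ r + λ₀ - 1 - s` then reflects the near-additivity of ceilings: if `u + v = m`,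
then `⌈u λ_i / m⌉ + ⌈v λ_i / m⌉` is `λ_i` or `λ_i + 1`, and it is `λ_i + 1` whenever `m ∤ u λ_i`,
which for `0 < u < m` is automatic when `gcd(m, λ_i) = 1`. -/

namespace Nat

lemma le_mul_ceilDiv {m : ℕ} (hm : 0 < m) (a : ℕ) : a ≤ m * (a ⌈/⌉ m) :=
  (ceilDiv_le_iff_le_mul hm).1 le_rfl

lemma ceilDiv_pos {m a : ℕ} (hm : 0 < m) (ha : 0 < a) : 0 < a ⌈/⌉ m := by
  by_contra! h
  have := (ceilDiv_le_iff_le_mul hm).1 h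
  omega

lemma mul_ceilDiv_lt_add {m : ℕ} (hm : 0 < m) (a : ℕ) : m * (a ⌈/⌉ m) < a + m := by
  rw [ceilDiv_eq_add_pred_div]
  have := Nat.mul_div_le (a + m - 1) m
  omega

lemma lt_mul_ceilDiv_of_not_dvd {m a : ℕ} (hm : 0 < m) (h : ¬ m ∣ a) : a < m * (a ⌈/⌉ m) :=
  (le_mul_ceilDiv hm a).lt_of_ne fun heq => h ⟨_, heq⟩

lemma ceilDiv_add_ceilDiv_le {m a b l : ℕ} (hm : 0 < m) (h : a + b = m * l) :
    a ⌈/⌉ m + b ⌈/⌉ m ≤ l + 1 := by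
  have ha := mul_ceilDiv_lt_add hm a
  have hb := mul_ceilDiv_lt_add hm b
  have : m * (a ⌈/⌉ m + b ⌈/⌉ m) < m * (l + 2) := by rw [mul_add, mul_add]; omega
  have := Nat.lt_of_mul_lt_mul_left this
  omega

lemma lt_ceilDiv_add_ceilDiv {m a b l : ℕ} (hm : 0 < m) (h : m * l < a + b) :
    l < a ⌈/⌉ m + b ⌈/⌉ m := by
  have ha := le_mul_ceilDiv hm a
  have hb := le_mul_ceilDiv hm b
  refine Nat.lt_of_mul_lt_mul_left (a := m) ?_
  rw [mul_add]
  omega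

lemma lt_ceilDiv_add_ceilDiv_of_not_dvd {m a b l : ℕ} (hm : 0 < m) (ha : ¬ m ∣ a)
    (h : m * l ≤ a + b) : l < a ⌈/⌉ m + b ⌈/⌉ m := by
  have ha := lt_mul_ceilDiv_of_not_dvd hm ha
  have hb := le_mul_ceilDiv hm b
  refine Nat.lt_of_mul_lt_mul_left (a := m) ?_
  rw [mul_add]
  omega

lemma mul_ceilDiv_le_iff {m l w : ℕ} (hm : 0 < m) (hl : 0 < l) : (w * l) ⌈/⌉ m ≤ l ↔ w ≤ m := by
  rw [ceilDiv_le_iff_le_mul hm]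
  exact Nat.mul_le_mul_right_iff hl

lemma le_sSup_iff_exists_le {S : Set ℕ} (hne : S.Nonempty) (hbdd : BddAbove S) {w : ℕ} :
    w ≤ sSup S ↔ ∃ v ∈ S, w ≤ v :=
  ⟨fun h => ⟨_, Nat.sSup_mem hne hbdd, h⟩, fun ⟨_, hv, hwv⟩ => le_csSup_of_le hbdd hv hwv⟩

end Nat

lemma exists_sum_range_eq_of_le_of_le {a b : ℕ → ℕ} {n k : ℕ} (hab : ∀ i < n, a i ≤ b i)
    (ha : ∑ i ∈ range n, a i ≤ k) (hb : k ≤ ∑ i ∈ range n, b i) :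
    ∃ s : ℕ → ℕ, (∀ i < n, a i ≤ s i ∧ s i ≤ b i) ∧ ∑ i ∈ range n, s i = k := by
  induction n generalizing k with
  | zero => exact ⟨a, by simp, by simp_all⟩
  | succ n ih =>
    rw [sum_range_succ] at ha hb
    have hA : ∑ i ∈ range n, a i ≤ ∑ i ∈ range n, b i :=
      sum_le_sum fun i hi => hab i (by simp at hi; omega)
    have hn := hab n n.lt_succ_self
    -- the last entry takes as much of `k` as it can, the others share the rest
    set x := min (b n) (k - ∑ i ∈ range n, a i)
    obtain ⟨s, hs, hsum⟩ := ih (k := k - x) (fun i hi => hab i (by omega)) (by omega) (by omega)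
    refine ⟨Function.update s n x, fun i hi => ?_, ?_⟩
    · rcases eq_or_ne i n with rfl | hin
      · simp only [Function.update_self]; omega
      · simp only [Function.update_of_ne hin]; exact hs i (by omega)
    · rw [sum_range_succ, sum_update_of_notMem notMem_range_self, Function.update_self, hsum]
      omega

section Eta

variable {m r : ℕ} {lam : ℕ → ℕ}

def ceilSum (m r : ℕ) (lam : ℕ → ℕ) (w : ℕ) : ℕ := ∑ i ∈ range r, (w * lam i) ⌈/⌉ m

lemma ceilSum_self (hm : 0 < m) : ceilSum m r lam m = ∑ i ∈ range r, lam i :=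
  sum_congr rfl fun i _ => by simpa using smul_ceilDiv hm (lam i)

lemma le_of_ceilSum_le (hm : 0 < m) (hr : 0 < r) (hlam : ∀ i < r, 0 < lam i) {w : ℕ}
    (h : ceilSum m r lam w ≤ ∑ i ∈ range r, lam i) : w ≤ m := by
  by_contra! hw
  refine h.not_gt (sum_lt_sum_of_nonempty (nonempty_range_iff.2 hr.ne') fun i hi => ?_)
  rw [← not_le, Nat.mul_ceilDiv_le_iff hm (hlam i (mem_range.1 hi))]
  exact hw.not_ge

lemma le_kinf_iff (hm : 0 < m) (hr : 0 < r) (hlam : ∀ i < r, 0 < lam i) {s : ℕ → ℕ} {w : ℕ} :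
    w ≤ kinf m r lam s ↔ ∀ i < r, (w * lam i) ⌈/⌉ m ≤ s i := by
  have hne : {v : ℕ | ∃ i, i < r ∧ v = s i * m / lam i}.Nonempty := ⟨_, 0, hr, rfl⟩
  rw [kinf, le_csInf_iff (OrderBot.bddBelow _) hne]
  refine ⟨fun h i hi => ?_, ?_⟩
  · rw [ceilDiv_le_iff_le_mul hm, mul_comm m, ← Nat.le_div_iff_mul_le (hlam i hi)]
    exact h _ ⟨i, hi, rfl⟩
  · rintro h _ ⟨i, hi, rfl⟩
    rw [Nat.le_div_iff_mul_le (hlam i hi), mul_comm _ m, ← ceilDiv_le_iff_le_mul hm]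
    exact h i hi

lemma le_eta_iff (hm : 0 < m) (hr : 0 < r) (hlam : ∀ i < r, 0 < lam i) {k : ℕ} (hrk : r ≤ k)
    (hk : k ≤ ∑ i ∈ range r, lam i) {w : ℕ} :
    w ≤ eta m r lam k ↔ ceilSum m r lam w ≤ k := by
  rcases Nat.eq_zero_or_pos w with rfl | hw
  · simp [ceilSum]
  rw [eta]
  refine (Nat.le_sSup_iff_exists_le ?_ ?_).trans ⟨?_, fun h => ?_⟩
  · obtain ⟨s, hs, hsum⟩ := exists_sum_range_eq_of_le_of_le (a := fun _ => 1) hlam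
      (by simpa using hrk) hk
    exact ⟨_, s, hs, hsum, rfl⟩
  · refine ⟨lam 0 * m, ?_⟩
    rintro _ ⟨s, hs, -, rfl⟩
    calc kinf m r lam s ≤ s 0 * m / lam 0 := Nat.sInf_le ⟨0, hr, rfl⟩
      _ ≤ s 0 * m := Nat.div_le_self _ _
      _ ≤ lam 0 * m := Nat.mul_le_mul_right m (hs 0 hr).2
  · rintro ⟨_, ⟨s, -, rfl, rfl⟩, hws⟩
    rw [le_kinf_iff hm hr hlam] at hws
    exact sum_le_sum fun i hi => hws i (mem_range.1 hi)
  · have hwm := le_of_ceilSum_le hm hr hlam (h.trans hk)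
    obtain ⟨s, hs, hsum⟩ := exists_sum_range_eq_of_le_of_le (b := lam)
      (fun i hi => (Nat.mul_ceilDiv_le_iff hm (hlam i hi)).2 hwm) h hk
    refine ⟨_, ⟨s, fun i hi => ⟨?_, (hs i hi).2⟩, hsum, rfl⟩,
      (le_kinf_iff hm hr hlam).2 fun i hi => (hs i hi).1⟩
    exact (Nat.ceilDiv_pos hm (Nat.mul_pos hw (hlam i hi))).trans_le (hs i hi).1

lemma eta_lt (hm : 0 < m) (hr : 0 < r) (hlam : ∀ i < r, 0 < lam i) {k : ℕ} (hrk : r ≤ k)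
    (hk : k < ∑ i ∈ range r, lam i) : eta m r lam k < m := by
  by_contra! h
  rw [le_eta_iff hm hr hlam hrk hk.le, ceilSum_self hm] at h
  exact h.not_gt hk

lemma ceilSum_eta_le (hm : 0 < m) (hr : 0 < r) (hlam : ∀ i < r, 0 < lam i) {k : ℕ} (hrk : r ≤ k)
    (hk : k ≤ ∑ i ∈ range r, lam i) : ceilSum m r lam (eta m r lam k) ≤ k :=
  (le_eta_iff hm hr hlam hrk hk).1 le_rfl

lemma ceilSum_add_ceilSum_le (hm : 0 < m) {u v : ℕ} (huv : u + v = m) :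
    ceilSum m r lam u + ceilSum m r lam v ≤ ∑ i ∈ range r, lam i + r := by
  calc ceilSum m r lam u + ceilSum m r lam v
      = ∑ i ∈ range r, ((u * lam i) ⌈/⌉ m + (v * lam i) ⌈/⌉ m) := sum_add_distrib.symm
    _ ≤ ∑ i ∈ range r, (lam i + 1) :=
      sum_le_sum fun i _ => Nat.ceilDiv_add_ceilDiv_le hm (by rw [← add_mul, huv])
    _ = ∑ i ∈ range r, lam i + r := by simp [sum_add_distrib]

lemma sum_add_le_ceilSum_add_ceilSum {u v : ℕ}
    (h : ∀ i < r, lam i < (u * lam i) ⌈/⌉ m + (v * lam i) ⌈/⌉ m) :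
    ∑ i ∈ range r, lam i + r ≤ ceilSum m r lam u + ceilSum m r lam v := by
  calc ∑ i ∈ range r, lam i + r = ∑ i ∈ range r, (lam i + 1) := by simp [sum_add_distrib]
    _ ≤ ∑ i ∈ range r, ((u * lam i) ⌈/⌉ m + (v * lam i) ⌈/⌉ m) :=
      sum_le_sum fun i hi => h i (mem_range.1 hi)
    _ = ceilSum m r lam u + ceilSum m r lam v := sum_add_distrib

lemma sum_add_le_ceilSum_add_ceilSum_of_lt (hm : 0 < m) (hlam : ∀ i < r, 0 < lam i) {u v : ℕ}
    (huv : m < u + v) : ∑ i ∈ range r, lam i + r ≤ ceilSum m r lam u + ceilSum m r lam v :=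
  sum_add_le_ceilSum_add_ceilSum fun i hi => Nat.lt_ceilDiv_add_ceilDiv hm <| by
    rw [← add_mul]; exact Nat.mul_lt_mul_of_pos_right huv (hlam i hi)

lemma sum_add_le_ceilSum_add_ceilSum_of_coprime (hm : 0 < m)
    (hcop : ∀ i < r, Nat.Coprime m (lam i)) {u v : ℕ} (hu : 0 < u) (hum : u < m)
    (huv : m ≤ u + v) : ∑ i ∈ range r, lam i + r ≤ ceilSum m r lam u + ceilSum m r lam v := by
  refine sum_add_le_ceilSum_add_ceilSum fun i hi => Nat.lt_ceilDiv_add_ceilDiv_of_not_dvd hm ?_ ?_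
  · exact fun hdvd => hum.not_ge (Nat.le_of_dvd hu ((hcop i hi).dvd_of_dvd_mul_right hdvd))
  · rw [← add_mul]; exact Nat.mul_le_mul_right _ huv

variable (hm : 0 < m) (hr : 0 < r) (hlam : ∀ i < r, 0 < lam i) {s t : ℕ} (hs : r ≤ s) (ht : r ≤ t)
  (hst : s + t + 1 = r + ∑ i ∈ range r, lam i)
include hm hr hlam hs ht hst

lemma sub_one_le_eta_add_eta : m - 1 ≤ eta m r lam s + eta m r lam t := by
  have hsm := eta_lt hm hr hlam hs (by omega)
  by_contra! h
  have hu : t < ceilSum m r lam (m - 1 - eta m r lam s) := by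
    rw [← not_le, ← le_eta_iff hm hr hlam ht (by omega)]; omega
  have hv : s < ceilSum m r lam (eta m r lam s + 1) := by
    rw [← not_le, ← le_eta_iff hm hr hlam hs (by omega)]; omega
  have := ceilSum_add_ceilSum_le (r := r) (lam := lam) hm
    (u := m - 1 - eta m r lam s) (v := eta m r lam s + 1) (by omega)
  omega

lemma eta_add_eta_le : eta m r lam s + eta m r lam t ≤ m := by
  by_contra! h
  have := sum_add_le_ceilSum_add_ceilSum_of_lt hm hlam h
  have := ceilSum_eta_le hm hr hlam hs (by omega)
  have := ceilSum_eta_le hm hr hlam ht (by omega)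
  omega

lemma eta_add_eta_le_sub_one (hcop : ∀ i < r, Nat.Coprime m (lam i)) :
    eta m r lam s + eta m r lam t ≤ m - 1 := by
  have hsm := eta_lt hm hr hlam hs (by omega)
  have htm := eta_lt hm hr hlam ht (by omega)
  by_contra! h
  have := sum_add_le_ceilSum_add_ceilSum_of_coprime hm hcop (u := eta m r lam s)
    (v := eta m r lam t) (by omega) hsm (by omega)
  have := ceilSum_eta_le hm hr hlam hs (by omega)
  have := ceilSum_eta_le hm hr hlam ht (by omega)
  omega

end Eta

lemma etaExt_of_le_of_lt {m r lam0 : ℕ} {lam : ℕ → ℕ} {k : ℕ} (hr : r ≤ k) (hk : k < lam0) :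
    etaExt m r lam0 lam k = eta m r lam k := by
  rw [etaExt, if_neg hr.not_gt, if_pos hk]

lemma etaExt_add_etaExt_of_lt_or_le {m r lam0 : ℕ} {lam : ℕ → ℕ} {s : ℕ} (hr : 0 < r)
    (hrl : r ≤ lam0) (hs : s < r ∨ lam0 ≤ s) :
    etaExt m r lam0 lam s + etaExt m r lam0 lam (r + lam0 - 1 - s) = m - 1 := by
  unfold etaExt
  split_ifs <;> omega

/-- For every s ∈ ℕ₀, η_s + η_{r+λ₀-1-s} ∈ {m-1, m}; and if gcd(m, λ_j) = 1 for all j,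
then η_s + η_{r+λ₀-1-s} = m - 1 for all s. -/
theorem stmt11 (m r : ℕ) (lam : ℕ → ℕ) (hm : 2 ≤ m) (hr : 2 ≤ r)
    (hlam : ∀ i, i < r → 1 ≤ lam i ∧ lam i < m) (lam0 : ℕ)
    (h0 : lam0 = ∑ i ∈ Finset.range r, lam i) :
    (∀ s : ℕ, etaExt m r lam0 lam s + etaExt m r lam0 lam (r + lam0 - 1 - s) = m - 1 ∨
        etaExt m r lam0 lam s + etaExt m r lam0 lam (r + lam0 - 1 - s) = m) ∧
      ((∀ j, j < r → Nat.gcd m (lam j) = 1) →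
        ∀ s : ℕ, etaExt m r lam0 lam s + etaExt m r lam0 lam (r + lam0 - 1 - s) = m - 1) := by
  have hm0 : 0 < m := by omega
  have hr0 : 0 < r := by omega
  have hlam0 : ∀ i < r, 0 < lam i := fun i hi => (hlam i hi).1
  have hrl : r ≤ lam0 := by
    simpa [h0] using card_nsmul_le_sum (range r) lam 1 fun i hi => hlam0 i (mem_range.1 hi)
  have hmid : ∀ s, r ≤ s → s < lam0 → etaExt m r lam0 lam s + etaExt m r lam0 lam
      (r + lam0 - 1 - s) = eta m r lam s + eta m r lam (r + lam0 - 1 - s) := fun s hs hsl => by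
    rw [etaExt_of_le_of_lt hs hsl, etaExt_of_le_of_lt (by omega) (by omega)]
  have hst : ∀ s, s < lam0 → s + (r + lam0 - 1 - s) + 1 = r + ∑ i ∈ range r, lam i := by omega
  refine ⟨fun s => ?_, fun hcop s => ?_⟩ <;> rcases em (r ≤ s ∧ s < lam0) with ⟨hs, hsl⟩ | hs
  · rw [hmid s hs hsl]
    have := sub_one_le_eta_add_eta hm0 hr0 hlam0 hs (by omega) (hst s hsl)
    have := eta_add_eta_le hm0 hr0 hlam0 hs (by omega) (hst s hsl)
    omega
  · exact Or.inl (etaExt_add_etaExt_of_lt_or_le hr0 hrl (by omega))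
  · rw [hmid s hs hsl]
    exact le_antisymm (eta_add_eta_le_sub_one hm0 hr0 hlam0 hs (by omega) (hst s hsl) hcop)
      (sub_one_le_eta_add_eta hm0 hr0 hlam0 hs (by omega) (hst s hsl))
  · exact etaExt_add_etaExt_of_lt_or_le hr0 hrl (by omega)
end

section
/- Let m ≥ 2 and r ≥ 2 be integers with gcd(m, r) = 1, and suppose λ₁ = ⋯ = λ_r = λ with 1 ≤ λ < m, gcd(m, λ) = 1, λ₀ = rλ. Then the numerical semigroup H = ⟨m, λ₀⟩ ∪ ⋃_{k=r}^{λ₀-1} {mk - k'λ₀ : 1 ≤ k' ≤ η_k}, with η_k as defined from the λ_i, equals ⟨m, r⟩. -/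
open Finset

/-!
For `0 ≤ a < r` and `1 ≤ t < λ` one has `η_{rt+a} = ⌊tm/λ⌋`: some `s_i` is at most `⌊k/r⌋`, and
the balanced tuple attains the bound. Hence `mk - k'rλ = (k mod r)·m + r(⌊k/r⌋m - k'λ)` lies in
`⟨m, r⟩` whenever `k' ≤ η_k`. Conversely write an element of `⟨m, r⟩` as `a₀m + b₀r + q·rλ` with
`a₀ < r`, `b₀ < λ`. If `b₀ > 0`, coprimality gives `1 ≤ t < λ` with `mt ≡ b₀ (mod λ)`; for
`k = rt + a₀` and `k' = ⌊tm/λ⌋` the element equals `mk - (k' - q)rλ`, which is either of the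
second kind (`q < k'`) or in `⟨m, rλ⟩`.
-/

section Eta

variable {m r l : ℕ}

lemma kinf_le {lam s : ℕ → ℕ} {i : ℕ} (hi : i < r) : kinf m r lam s ≤ s i * m / lam i :=
  Nat.sInf_le ⟨i, hi, rfl⟩

lemma le_kinf {lam s : ℕ → ℕ} {c : ℕ} (hr : 0 < r) (h : ∀ i < r, c ≤ s i * m / lam i) :
    c ≤ kinf m r lam s :=
  le_csInf ⟨_, 0, hr, rfl⟩ (by rintro w ⟨i, hi, rfl⟩; exact h i hi)

lemma exists_le_div_of_sum_range_eq {s : ℕ → ℕ} {k : ℕ} (hr : 0 < r)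
    (hsum : ∑ i ∈ range r, s i = k) : ∃ i < r, s i ≤ k / r := by
  have hlt : ∑ i ∈ range r, s i < ∑ _i ∈ range r, (k / r + 1) := by
    rw [sum_const, card_range, smul_eq_mul, hsum]
    exact Nat.lt_mul_div_succ k hr
  obtain ⟨i, hi, h⟩ := exists_lt_of_sum_lt hlt
  exact ⟨i, mem_range.1 hi, Nat.lt_succ_iff.1 h⟩

lemma kinf_const_le_of_sum_range_eq {s : ℕ → ℕ} {k : ℕ} (hr : 0 < r)
    (hsum : ∑ i ∈ range r, s i = k) : kinf m r (fun _ => l) s ≤ k / r * m / l := by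
  obtain ⟨i, hi, hsi⟩ := exists_le_div_of_sum_range_eq hr hsum
  exact (kinf_le hi).trans (Nat.div_le_div_right (Nat.mul_le_mul_right m hsi))

lemma eta_const_le (hr : 0 < r) (k : ℕ) : eta m r (fun _ => l) k ≤ k / r * m / l :=
  csSup_le' (by rintro v ⟨s, -, hsum, rfl⟩; exact kinf_const_le_of_sum_range_eq hr hsum)

lemma div_le_eta_const {a t : ℕ} (ha : a < r) (ht : 1 ≤ t) (htl : t < l) :
    t * m / l ≤ eta m r (fun _ => l) (r * t + a) := by
  have hr : 0 < r := by omega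
  set s : ℕ → ℕ := fun i => t + if i < a then 1 else 0
  have hsum : ∑ i ∈ range r, s i = r * t + a := by
    simp only [s, sum_add_distrib, sum_const, smul_eq_mul, sum_boole, range_eq_Ico,
      Ico_filter_lt_of_le_right ha.le, Nat.card_Ico, Nat.sub_zero, Nat.cast_id]
  have hs : ∀ i < r, 1 ≤ s i ∧ s i ≤ l := fun i _ => by simp only [s]; split <;> omega
  have hbdd : BddAbove {v : ℕ | ∃ s : ℕ → ℕ, (∀ i, i < r → 1 ≤ s i ∧ s i ≤ l) ∧
      ∑ i ∈ range r, s i = r * t + a ∧ v = kinf m r (fun _ => l) s} :=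
    ⟨_, by rintro v ⟨s, -, hsum, rfl⟩; exact kinf_const_le_of_sum_range_eq hr hsum⟩
  refine (le_kinf hr fun i _ => ?_).trans (le_csSup hbdd ⟨s, hs, hsum, rfl⟩)
  exact Nat.div_le_div_right (Nat.mul_le_mul_right m (by simp only [s]; omega))

end Eta

section Semigroup

variable {m r l : ℕ}

lemma exists_eq_mul_add_mul_of_le_eta_const (hr : 0 < r) (hl : 0 < l) {k k' : ℕ}
    (hk' : k' ≤ eta m r (fun _ => l) k) :
    ∃ a b : ℕ, (m : ℤ) * k - k' * ((r * l : ℕ) : ℤ) = a * m + b * r := by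
  have hk'l : k' * l ≤ k / r * m :=
    (Nat.le_div_iff_mul_le hl).1 (hk'.trans (eta_const_le hr k))
  have hk : (k : ℤ) = r * (k / r : ℕ) + (k % r : ℕ) := by exact_mod_cast (Nat.div_add_mod k r).symm
  refine ⟨k % r, k / r * m - k' * l, ?_⟩
  rw [Nat.cast_sub hk'l]
  simp only [Nat.cast_mul]
  linear_combination (m : ℤ) * hk

lemma exists_mul_mod_eq_of_coprime (hml : Nat.Coprime m l) {b : ℕ} (hb : 0 < b) (hbl : b < l) :
    ∃ t, 1 ≤ t ∧ t < l ∧ m * t % l = b := by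
  obtain ⟨u, -, hu⟩ := Nat.exists_mul_mod_eq_one_of_coprime hml (by omega)
  have hmt : m * (u * b % l) % l = b := by
    rw [Nat.mul_mod, Nat.mod_mod, ← Nat.mul_mod, ← mul_assoc, Nat.mul_mod, hu, one_mul,
      Nat.mod_mod, Nat.mod_eq_of_lt hbl]
  refine ⟨u * b % l, Nat.pos_of_ne_zero fun h => ?_, Nat.mod_lt _ (by omega), hmt⟩
  rw [h, mul_zero, Nat.zero_mod] at hmt
  omega

lemma exists_eq_mul_add_mul_add_mul (hr : 0 < r) (hl : 0 < l) (a b : ℕ) :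
    ∃ a₀ < r, ∃ b₀ < l, ∃ q, a * m + b * r = a₀ * m + b₀ * r + q * (r * l) := by
  set B := a / r * m + b
  refine ⟨a % r, Nat.mod_lt _ hr, B % l, Nat.mod_lt _ hl, B / l, ?_⟩
  have ha := Nat.div_add_mod a r
  have hB := Nat.div_add_mod B l
  calc a * m + b * r = (r * (a / r) + a % r) * m + b * r := by rw [ha]
    _ = a % r * m + B * r := by ring
    _ = a % r * m + (l * (B / l) + B % l) * r := by rw [hB]
    _ = a % r * m + B % l * r + B / l * (r * l) := by ring

lemma mem_span_or_eq_sub_of_pos (hml : Nat.Coprime m l) {a₀ b₀ q : ℕ}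
    (ha₀ : a₀ < r) (hb₀ : 0 < b₀) (hb₀l : b₀ < l) :
    (∃ a b : ℕ, ((a₀ * m + b₀ * r + q * (r * l) : ℕ) : ℤ) = a * m + b * ((r * l : ℕ) : ℤ)) ∨
      ∃ k : ℕ, r ≤ k ∧ k ≤ r * l - 1 ∧ ∃ k' : ℕ, 1 ≤ k' ∧ k' ≤ eta m r (fun _ => l) k ∧
        ((a₀ * m + b₀ * r + q * (r * l) : ℕ) : ℤ) = (m : ℤ) * k - (k' : ℤ) * ((r * l : ℕ) : ℤ) := by
  obtain ⟨t, ht, htl, hmt⟩ := exists_mul_mod_eq_of_coprime hml hb₀ hb₀l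
  have hk' : l * (t * m / l) + b₀ = m * t := by rw [mul_comm t, ← hmt, Nat.div_add_mod]
  have hmk : m * (r * t + a₀) = a₀ * m + b₀ * r + t * m / l * (r * l) := by
    rw [mul_add, mul_left_comm, ← hk']; ring
  have hrk : r ≤ r * t + a₀ := by nlinarith
  have hkrl : r * t + a₀ ≤ r * l - 1 := by
    have : r * t + r ≤ r * l := by nlinarith
    omega
  by_cases hq : q < t * m / l
  · refine Or.inr ⟨r * t + a₀, hrk, hkrl, t * m / l - q, by omega,
      (Nat.sub_le _ _).trans (div_le_eta_const ha₀ ht htl), ?_⟩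
    rw [Nat.cast_sub hq.le, ← Nat.cast_mul, hmk]
    push_cast
    ring
  · refine Or.inl ⟨r * t + a₀, q - t * m / l, ?_⟩
    rw [Nat.cast_sub (not_lt.1 hq), mul_comm ((r * t + a₀ : ℕ) : ℤ), ← Nat.cast_mul, hmk]
    push_cast
    ring

end Semigroup

theorem stmt13_general (m r l : ℕ) (hr : 2 ≤ r)
    (hl1 : 1 ≤ l) (hcol : Nat.gcd m l = 1)
    (lam0 : ℕ) (h0 : lam0 = r * l) :
    {y : ℤ | (∃ a b : ℕ, y = a * m + b * lam0) ∨
        ∃ k : ℕ, r ≤ k ∧ k ≤ lam0 - 1 ∧ ∃ k' : ℕ, 1 ≤ k' ∧ k' ≤ eta m r (fun _ => l) k ∧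
          y = (m : ℤ) * k - (k' : ℤ) * lam0} =
      {y : ℤ | ∃ a b : ℕ, y = a * m + b * r} := by
  subst h0
  have hr0 : 0 < r := by omega
  ext y
  constructor
  · rintro (⟨a, b, rfl⟩ | ⟨k, -, -, k', -, hk', rfl⟩)
    · exact ⟨a, b * l, by push_cast; ring⟩
    · exact exists_eq_mul_add_mul_of_le_eta_const hr0 hl1 hk'
  · rintro ⟨a, b, rfl⟩
    obtain ⟨a₀, ha₀, b₀, hb₀, q, h⟩ := exists_eq_mul_add_mul_add_mul (m := m) hr0 hl1 a b
    have hy : (a * m + b * r : ℤ) = ((a₀ * m + b₀ * r + q * (r * l) : ℕ) : ℤ) := by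
      exact_mod_cast h
    rw [hy]
    rcases Nat.eq_zero_or_pos b₀ with rfl | hb₀pos
    · exact Or.inl ⟨a₀, q, by push_cast; ring⟩
    · exact mem_span_or_eq_sub_of_pos hcol ha₀ hb₀pos hb₀

/-- When λ₁ = ⋯ = λ_r = λ with gcd(m,λ) = gcd(m,r) = 1, the semigroup
⟨m,λ₀⟩ ∪ ⋃_k {mk - k'λ₀ : 1 ≤ k' ≤ η_k} equals ⟨m, r⟩. -/
theorem stmt13 (m r l : ℕ) (hm : 2 ≤ m) (hr : 2 ≤ r) (hcor : Nat.gcd m r = 1)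
    (hl1 : 1 ≤ l) (hlm : l < m) (hcol : Nat.gcd m l = 1)
    (lam0 : ℕ) (h0 : lam0 = r * l) :
    {y : ℤ | (∃ a b : ℕ, y = a * m + b * lam0) ∨
        ∃ k : ℕ, r ≤ k ∧ k ≤ lam0 - 1 ∧ ∃ k' : ℕ, 1 ≤ k' ∧ k' ≤ eta m r (fun _ => l) k ∧
          y = (m : ℤ) * k - (k' : ℤ) * lam0} =
      {y : ℤ | ∃ a b : ℕ, y = a * m + b * r} :=
  stmt13_general m r l hr hl1 hcol lam0 h0
end
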